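/- Fix a Hermitian quaternion matrix C ∈ ℍ^{n×n}, quaternion matrices A_1, …, A_m ∈ ℍ^{n×n}, and b ∈ ℍ^m. Then the following two sets of real numbers are equal: (1) { Re(Tr(C* H)) : H ∈ ℍ^{n×n} Hermitian, H quaternion-PSD, and Tr(A_i* H) = b_i for all i }; (2) { Re(Tr(C* H_X)) : X a real symmetric positive semidefinite 4n×4n matrix with Tr(A_i* H_X) = b_i for all i }, where H_X := R_X + I_X·i + J_X·j + K_X·k is built from the blocks of X. In particular, the quaternion SDP and its economical real SDP reformulation attain the same objective values, hence have the same optimal value; moreover, from any optimal X of the real problem, H_X is an optimal solution of the quaternion problem. -/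

import Mathlib

/-!
With `e = (1, i, j, k)` one has `H_X k l = ∑ a b, X (a,k) (b,l) • e_a ē_b`. Hence
`Re (v* H_X v) = ∑ c, y_cᵀ X y_c`, where `y_c (a,k)` is the `c`-th coordinate of `ē_a v_k`, so a
positive semidefinite `X` yields a Hermitian quaternion-PSD `H_X` with the same constraint and
objective values. Conversely, since `∑ a b, Re (ē_a h e_b) • e_a ē_b = 4 h`, the real symmetric
matrix `X (a,k) (b,l) = Re (ē_a H k l e_b) / 4` satisfies `H_X = H`, and
`xᵀ X x = Re (v* H v) / 4` for `v_k = ∑ a, x (a,k) • e_a`, so `X` is positive semidefinite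
whenever `H` is quaternion-PSD.
-/

open Matrix

/-- The quaternion matrix `H_X = R_X + I_X·i + J_X·j + K_X·k` built from the
`4 × 4` block structure of a real `4n × 4n` matrix `X`. -/
noncomputable def quatOfBlocks {n : ℕ}
    (X : Matrix (Fin 4 × Fin n) (Fin 4 × Fin n) ℝ) :
    Matrix (Fin n) (Fin n) (Quaternion ℝ) := fun k l =>
  ⟨X (0, k) (0, l) + X (1, k) (1, l) + X (2, k) (2, l) + X (3, k) (3, l),
   X (1, k) (0, l) - X (0, k) (1, l) + X (3, k) (2, l) - X (2, k) (3, l),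
   X (2, k) (0, l) - X (0, k) (2, l) - X (3, k) (1, l) + X (1, k) (3, l),
   X (3, k) (0, l) - X (0, k) (3, l) + X (2, k) (1, l) - X (1, k) (2, l)⟩

open Quaternion Finset

noncomputable def oneIJK : Module.Basis (Fin 4) ℝ ℍ[ℝ] :=
  QuaternionAlgebra.basisOneIJK (-1) 0 (-1)

theorem oneIJK_repr (q : ℍ[ℝ]) : oneIJK.repr q = ![q.re, q.imI, q.imJ, q.imK] := rfl

theorem re_oneIJK (a : Fin 4) : (oneIJK a).re = if a = 0 then 1 else 0 := by
  rw [show (oneIJK a).re = oneIJK.repr (oneIJK a) 0 from rfl, oneIJK.repr_self,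
    Finsupp.single_apply]

theorem imI_oneIJK (a : Fin 4) : (oneIJK a).imI = if a = 1 then 1 else 0 := by
  rw [show (oneIJK a).imI = oneIJK.repr (oneIJK a) 1 from rfl, oneIJK.repr_self,
    Finsupp.single_apply]

theorem imJ_oneIJK (a : Fin 4) : (oneIJK a).imJ = if a = 2 then 1 else 0 := by
  rw [show (oneIJK a).imJ = oneIJK.repr (oneIJK a) 2 from rfl, oneIJK.repr_self,
    Finsupp.single_apply]

theorem imK_oneIJK (a : Fin 4) : (oneIJK a).imK = if a = 3 then 1 else 0 := by
  rw [show (oneIJK a).imK = oneIJK.repr (oneIJK a) 3 from rfl, oneIJK.repr_self,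
    Finsupp.single_apply]

theorem Quaternion.re_sum {R ι : Type*} [CommRing R] (s : Finset ι) (f : ι → ℍ[R]) :
    (∑ i ∈ s, f i).re = ∑ i ∈ s, (f i).re :=
  map_sum (QuaternionAlgebra.reₗ (-1 : R) 0 (-1)) f s

theorem re_star_mul_eq_sum_repr (p q : ℍ[ℝ]) :
    (star p * q).re = ∑ c, oneIJK.repr p c * oneIJK.repr q c := by
  simp only [oneIJK_repr, Fin.sum_univ_four, re_mul, re_star, imI_star, imJ_star, imK_star,
    cons_val_zero, cons_val_one, Matrix.cons_val]
  ring

theorem re_star_mul_mul_eq_sum_repr (h v w : ℍ[ℝ]) :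
    (star v * h * w).re =
      ∑ a, ∑ b, oneIJK.repr v a * oneIJK.repr w b * (star (oneIJK a) * h * oneIJK b).re := by
  simp only [oneIJK_repr, cons_val_zero, cons_val_one, Matrix.cons_val, Fin.sum_univ_four,
    re_mul, imI_mul, imJ_mul, imK_mul, re_star, imI_star, imJ_star, imK_star,
    re_oneIJK, imI_oneIJK, imJ_oneIJK, imK_oneIJK, Fin.isValue, ↓reduceIte, Fin.reduceEq]
  ring

theorem sum_re_div_four_smul_oneIJK_mul_star (h : ℍ[ℝ]) :
    ∑ a, ∑ b, ((star (oneIJK a) * h * oneIJK b).re / 4) • (oneIJK a * star (oneIJK b)) = h := by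
  ext <;>
  · simp only [Fin.sum_univ_four, re_add, imI_add, imJ_add, imK_add, re_smul, imI_smul,
      imJ_smul, imK_smul, smul_eq_mul, re_mul, imI_mul, imJ_mul, imK_mul, re_star, imI_star,
      imJ_star, imK_star, re_oneIJK, imI_oneIJK, imJ_oneIJK, imK_oneIJK, Fin.isValue,
      ↓reduceIte, Fin.reduceEq]
    ring

theorem quatOfBlocks_apply_eq_sum {n : ℕ} (X : Matrix (Fin 4 × Fin n) (Fin 4 × Fin n) ℝ)
    (k l : Fin n) :
    quatOfBlocks X k l = ∑ a, ∑ b, X (a, k) (b, l) • (oneIJK a * star (oneIJK b)) := by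
  ext <;>
  · simp only [quatOfBlocks, Fin.sum_univ_four, re_add, imI_add, imJ_add, imK_add, re_smul,
      imI_smul, imJ_smul, imK_smul, smul_eq_mul, re_mul, imI_mul, imJ_mul, imK_mul, re_star,
      imI_star, imJ_star, imK_star, re_oneIJK, imI_oneIJK, imJ_oneIJK, imK_oneIJK, Fin.isValue,
      ↓reduceIte, Fin.reduceEq]
    ring

theorem Fintype.sum_sum_prod_type_right {α β M : Type*} [Fintype α] [Fintype β]
    [AddCommMonoid M] (f : α × β → α × β → M) :
    ∑ p, ∑ q, f p q = ∑ k, ∑ l, ∑ a, ∑ b, f (a, k) (b, l) := by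
  simp only [Fintype.sum_prod_type_right]
  exact Finset.sum_congr rfl fun k _ => Finset.sum_comm

section
variable {ι : Type*}

noncomputable def blocksOfQuat (H : Matrix ι ι ℍ[ℝ]) :
    Matrix (Fin 4 × ι) (Fin 4 × ι) ℝ :=
  fun p q => (star (oneIJK p.1) * H p.2 q.2 * oneIJK q.1).re / 4

theorem isHermitian_blocksOfQuat {H : Matrix ι ι ℍ[ℝ]} (hH : H.IsHermitian) :
    (blocksOfQuat H).IsHermitian := by
  ext p q
  rw [conjTranspose_apply, star_trivial, blocksOfQuat, blocksOfQuat, ← hH.apply p.2 q.2,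
    ← Quaternion.re_star]
  simp only [star_mul, star_star, mul_assoc]

noncomputable def twistedCoords (v : ι → ℍ[ℝ]) (c : Fin 4) : Fin 4 × ι → ℝ :=
  fun p => oneIJK.repr (star (oneIJK p.1) * v p.2) c

variable [Fintype ι]

theorem dotProduct_blocksOfQuat_mulVec (H : Matrix ι ι ℍ[ℝ]) {x : Fin 4 × ι → ℝ}
    {v : ι → ℍ[ℝ]} (hv : ∀ a k, oneIJK.repr (v k) a = x (a, k)) :
    x ⬝ᵥ (blocksOfQuat H *ᵥ x) = (∑ k, ∑ l, star (v k) * H k l * v l).re / 4 := by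
  calc x ⬝ᵥ (blocksOfQuat H *ᵥ x) = ∑ p, ∑ q, x p * blocksOfQuat H p q * x q := by
        simp only [dotProduct, mulVec, mul_sum, mul_assoc]
    _ = ∑ k, ∑ l, ∑ a, ∑ b, x (a, k) * blocksOfQuat H (a, k) (b, l) * x (b, l) :=
        Fintype.sum_sum_prod_type_right _
    _ = _ := by
        rw [Quaternion.re_sum, sum_div]
        refine sum_congr rfl fun k _ => ?_
        rw [Quaternion.re_sum, sum_div]
        refine sum_congr rfl fun l _ => ?_
        rw [re_star_mul_mul_eq_sum_repr, sum_div]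
        refine sum_congr rfl fun a _ => ?_
        rw [sum_div]
        refine sum_congr rfl fun b _ => ?_
        rw [hv, hv, blocksOfQuat]
        ring

theorem posSemidef_blocksOfQuat {H : Matrix ι ι ℍ[ℝ]} (hH : H.IsHermitian)
    (hpos : ∀ v : ι → ℍ[ℝ], 0 ≤ (∑ k, ∑ l, star (v k) * H k l * v l).re) :
    (blocksOfQuat H).PosSemidef := by
  refine .of_dotProduct_mulVec_nonneg (isHermitian_blocksOfQuat hH) fun x => ?_
  have hv a k : oneIJK.repr (oneIJK.equivFun.symm fun b => x (b, k)) a = x (a, k) := by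
    rw [← oneIJK.equivFun_apply, LinearEquiv.apply_symm_apply]
  rw [star_trivial, dotProduct_blocksOfQuat_mulVec H hv]
  exact div_nonneg (hpos _) zero_le_four

end

section
variable {n : ℕ}

theorem re_star_mul_quatOfBlocks_mul (X : Matrix (Fin 4 × Fin n) (Fin 4 × Fin n) ℝ)
    (k l : Fin n) (v w : ℍ[ℝ]) :
    (star v * quatOfBlocks X k l * w).re =
      ∑ a, ∑ b, ∑ c, oneIJK.repr (star (oneIJK a) * v) c * X (a, k) (b, l) *
        oneIJK.repr (star (oneIJK b) * w) c := by
  rw [quatOfBlocks_apply_eq_sum, mul_sum, sum_mul, Quaternion.re_sum]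
  refine sum_congr rfl fun a _ => ?_
  rw [mul_sum, sum_mul, Quaternion.re_sum]
  refine sum_congr rfl fun b _ => ?_
  have h_star : star v * (oneIJK a * star (oneIJK b)) * w =
      star (star (oneIJK a) * v) * (star (oneIJK b) * w) := by
    simp only [star_mul, star_star, mul_assoc]
  rw [mul_smul_comm, smul_mul_assoc, Quaternion.re_smul, h_star, re_star_mul_eq_sum_repr,
    smul_eq_mul, mul_sum]
  exact sum_congr rfl fun c _ => by ring

theorem re_sum_star_mul_quatOfBlocks_mul (X : Matrix (Fin 4 × Fin n) (Fin 4 × Fin n) ℝ)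
    (v : Fin n → ℍ[ℝ]) :
    (∑ k, ∑ l, star (v k) * quatOfBlocks X k l * v l).re =
      ∑ c, twistedCoords v c ⬝ᵥ (X *ᵥ twistedCoords v c) := by
  calc (∑ k, ∑ l, star (v k) * quatOfBlocks X k l * v l).re
      = ∑ k, ∑ l, ∑ a, ∑ b, ∑ c,
          twistedCoords v c (a, k) * X (a, k) (b, l) * twistedCoords v c (b, l) := by
        simp only [Quaternion.re_sum, re_star_mul_quatOfBlocks_mul, twistedCoords]
    _ = ∑ p, ∑ q, ∑ c, twistedCoords v c p * X p q * twistedCoords v c q :=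
        (Fintype.sum_sum_prod_type_right fun p q : Fin 4 × Fin n =>
          ∑ c, twistedCoords v c p * X p q * twistedCoords v c q).symm
    _ = ∑ c, ∑ p, ∑ q, twistedCoords v c p * X p q * twistedCoords v c q :=
        (sum_congr rfl fun p _ => sum_comm).trans sum_comm
    _ = _ := by simp only [dotProduct, mulVec, mul_sum, mul_assoc]

theorem re_sum_star_mul_quatOfBlocks_mul_nonneg
    {X : Matrix (Fin 4 × Fin n) (Fin 4 × Fin n) ℝ} (hX : X.PosSemidef) (v : Fin n → ℍ[ℝ]) :
    0 ≤ (∑ k, ∑ l, star (v k) * quatOfBlocks X k l * v l).re := by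
  rw [re_sum_star_mul_quatOfBlocks_mul]
  refine sum_nonneg fun c _ => ?_
  simpa only [star_trivial] using hX.dotProduct_mulVec_nonneg (twistedCoords v c)

theorem isHermitian_quatOfBlocks {X : Matrix (Fin 4 × Fin n) (Fin 4 × Fin n) ℝ}
    (hX : X.IsHermitian) : (quatOfBlocks X).IsHermitian := by
  ext k l : 1
  rw [conjTranspose_apply, quatOfBlocks_apply_eq_sum, quatOfBlocks_apply_eq_sum]
  simp only [star_sum, Quaternion.star_smul, star_mul, star_star]
  refine sum_comm.trans (sum_congr rfl fun a _ => sum_congr rfl fun b _ => ?_)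
  rw [← hX.apply, star_trivial]

theorem quatOfBlocks_blocksOfQuat (H : Matrix (Fin n) (Fin n) ℍ[ℝ]) :
    quatOfBlocks (blocksOfQuat H) = H := by
  ext k l : 1
  rw [quatOfBlocks_apply_eq_sum]
  simp only [blocksOfQuat]
  exact sum_re_div_four_smul_oneIJK_mul_star _

end

theorem quaternion_sdp_eq_real_sdp_values_general {n m : ℕ}
    (C : Matrix (Fin n) (Fin n) (Quaternion ℝ))
    (A : Fin m → Matrix (Fin n) (Fin n) (Quaternion ℝ))
    (b : Fin m → Quaternion ℝ) :
    {r : ℝ | ∃ H : Matrix (Fin n) (Fin n) (Quaternion ℝ),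
        H = Hᴴ ∧
        (∀ v : Fin n → Quaternion ℝ, 0 ≤ (∑ k, ∑ l, star (v k) * H k l * v l).re) ∧
        (∀ i, ((A i)ᴴ * H).trace = b i) ∧
        r = ((Cᴴ * H).trace).re} =
    {r : ℝ | ∃ X : Matrix (Fin 4 × Fin n) (Fin 4 × Fin n) ℝ,
        X.PosSemidef ∧
        (∀ i, ((A i)ᴴ * quatOfBlocks X).trace = b i) ∧
        r = ((Cᴴ * quatOfBlocks X).trace).re} := by
  ext r
  constructor
  · rintro ⟨H, hH, hpos, hA, rfl⟩
    refine ⟨blocksOfQuat H, posSemidef_blocksOfQuat hH.symm hpos, ?_⟩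
    rw [quatOfBlocks_blocksOfQuat]
    exact ⟨hA, rfl⟩
  · rintro ⟨X, hX, hA, rfl⟩
    exact ⟨quatOfBlocks X, (isHermitian_quatOfBlocks hX.1).symm,
      re_sum_star_mul_quatOfBlocks_mul_nonneg hX, hA, rfl⟩

/-- The quaternion SDP and its economical real SDP reformulation attain exactly the
same set of objective values (in particular they have the same optimal value, and
from any optimal `X` of the real problem, `H_X` is optimal for the quaternion one). -/
theorem quaternion_sdp_eq_real_sdp_values {n m : ℕ}
    (C : Matrix (Fin n) (Fin n) (Quaternion ℝ)) (hC : C = Cᴴ)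
    (A : Fin m → Matrix (Fin n) (Fin n) (Quaternion ℝ))
    (b : Fin m → Quaternion ℝ) :
    {r : ℝ | ∃ H : Matrix (Fin n) (Fin n) (Quaternion ℝ),
        H = Hᴴ ∧
        (∀ v : Fin n → Quaternion ℝ, 0 ≤ (∑ k, ∑ l, star (v k) * H k l * v l).re) ∧
        (∀ i, ((A i)ᴴ * H).trace = b i) ∧
        r = ((Cᴴ * H).trace).re} =
    {r : ℝ | ∃ X : Matrix (Fin 4 × Fin n) (Fin 4 × Fin n) ℝ,
        X.PosSemidef ∧
        (∀ i, ((A i)ᴴ * quatOfBlocks X).trace = b i) ∧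
        r = ((Cᴴ * quatOfBlocks X).trace).re} :=
  quaternion_sdp_eq_real_sdp_values_general C A b
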